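/- arXiv:1812.01488 — 3 statements merged into one kernel-verified Lean document; each statement's English description precedes it below -/
import Mathlib

section
/- Theorem 2 (Infinite Horizon State-Option Transition Matrix). Fix ϑ ∈ ℝⁿ and suppose there exists μ : S × O → ℝ such that for every (s',o) the Cesàro averages of the shifted state–option marginals converge: (1/T) ∑_{t=1}^{T} d_t(s',o) → μ(s',o) as T → ∞. Then for all i, j: (1/T)·(G^T_ϑ)_{ij} → −∑_{s',o} μ(s',o) · ∂_i ln β(o,s',ϑ) · ∂_j ln(1 − β(o,s',ϑ) + β(o,s',ϑ)·π_O(s',o)) as T → ∞; that is, the normalized Fisher information matrix over state–option transition paths converges to minus the stationary expectation of the outer product of the score of the termination probability and the score of the continuation probability. -/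
open scoped Classical

/-- Partial derivative of `f : ℝⁿ → ℝ` with respect to the `i`-th coordinate of `ϑ`. -/
noncomputable def pd {n : ℕ} (i : Fin n) (f : (Fin n → ℝ) → ℝ) (ϑ : Fin n → ℝ) : ℝ :=
  fderiv ℝ f ϑ (Pi.single i 1)

/-- Option-transition kernel
`K_ϑ(o,s',o') = (1 − β(o,s',ϑ))·𝟙[o' = o] + β(o,s',ϑ)·π_O(s',o')`. -/
noncomputable def optKernel {S O : Type*} [DecidableEq O] {n : ℕ}
    (β : O → S → (Fin n → ℝ) → ℝ) (πO : S → O → ℝ) (ϑ : Fin n → ℝ)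
    (o : O) (s' : S) (o' : O) : ℝ :=
  (1 - β o s' ϑ) * (if o' = o then 1 else 0) + β o s' ϑ * πO s' o'

/-- Probability of a state–option transition path
`x' = (o_0, s_1, o_1, s_2, …)`, encoded as `y : Fin (T+1) → O × S` with
`y t = (o_t, s_{t+1})`:
`Pr(x';ϑ) = d₀(o₀,s₁) · ∏_t K_ϑ(o_t, s_{t+1}, o_{t+1}) · Q(o_{t+1}, s_{t+1}, s_{t+2})`. -/
noncomputable def tPathProb {S O : Type*} [DecidableEq O] {n : ℕ}
    (β : O → S → (Fin n → ℝ) → ℝ) (πO : S → O → ℝ) (Q : O → S → S → ℝ)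
    (d0 : O × S → ℝ) (T : ℕ) (ϑ : Fin n → ℝ) (y : Fin (T + 1) → O × S) : ℝ :=
  d0 (y 0)
    * ∏ t : Fin T,
        (optKernel β πO ϑ (y t.castSucc).1 (y t.castSucc).2 (y t.succ).1
          * Q (y t.succ).1 (y t.castSucc).2 (y t.succ).2)

/-- `T`-step Fisher information matrix of the state–option transition path distribution:
`(G^T_ϑ)_{ij} = ∑_{x' : Pr(x';ϑ)>0} Pr(x';ϑ) ∂_i ln Pr(x';ϑ) ∂_j ln Pr(x';ϑ)`. -/
noncomputable def tPathFisher {S O : Type*} [Fintype S] [Fintype O] [DecidableEq O] {n : ℕ}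
    (β : O → S → (Fin n → ℝ) → ℝ) (πO : S → O → ℝ) (Q : O → S → S → ℝ)
    (d0 : O × S → ℝ) (T : ℕ) (ϑ : Fin n → ℝ) (i j : Fin n) : ℝ :=
  ∑ y ∈ Finset.univ.filter (fun y : Fin (T + 1) → O × S =>
      0 < tPathProb β πO Q d0 T ϑ y),
    tPathProb β πO Q d0 T ϑ y
      * pd i (fun ϑ' => Real.log (tPathProb β πO Q d0 T ϑ' y)) ϑ
      * pd j (fun ϑ' => Real.log (tPathProb β πO Q d0 T ϑ' y)) ϑ

/-- The shifted state–option marginal `d_t(s',o)`: the probability that the state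
entered at step `t` is `s'` while option `o` is the option active upon arrival, computed
from the horizon-`t` path distribution (it is independent of the horizon). -/
noncomputable def tMarginal {S O : Type*} [Fintype S] [Fintype O] [DecidableEq O]
    [DecidableEq S] {n : ℕ}
    (β : O → S → (Fin n → ℝ) → ℝ) (πO : S → O → ℝ) (Q : O → S → S → ℝ)
    (d0 : O × S → ℝ) (ϑ : Fin n → ℝ) (t : ℕ) (s' : S) (o : O) : ℝ :=
  ∑ y ∈ Finset.univ.filter (fun y : Fin (t + 1) → O × S => y (Fin.last t) = (o, s')),
    tPathProb β πO Q d0 t ϑ y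

/-!
Up to a ϑ-independent constant, `ln Pr(x';ϑ)` is `∑ₜ ln K_ϑ(o_{t-1}, s_t, o_t)`, so the path
score is a sum of one-step scores. Each one-step score has conditional mean zero given the past
(`∑_{o'} ∂K_ϑ(o, s', o') = ∂ 1 = 0`), so the cross terms of the Fisher matrix vanish and
`G^T_ϑ = ∑_{t<T} ∑_{s',o} d_t(s',o) · F(s',o)` with `F` the one-step Fisher matrix of the kernel
`K_ϑ(o, s', ·)`. A direct computation gives
`F(s',o)_{ij} = -∂_i ln β(o,s',ϑ) · ∂_j ln β'(o,s',ϑ)`, and the Cesàro hypothesis finishes.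
-/

open Finset

section PartialDerivative

variable {n : ℕ} {i : Fin n} {ϑ : Fin n → ℝ}

theorem pd_add_const (f : (Fin n → ℝ) → ℝ) (c : ℝ) :
    pd i (fun x => f x + c) ϑ = pd i f ϑ := by
  simp only [pd, fderiv_add_const]

theorem pd_const_add_mul {f : (Fin n → ℝ) → ℝ} (hf : DifferentiableAt ℝ f ϑ) (a b : ℝ) :
    pd i (fun x => a + b * f x) ϑ = b * pd i f ϑ := by
  simp only [pd, fderiv_const_add, fderiv_const_mul hf, smul_apply, smul_eq_mul]

theorem pd_sum {ι : Type*} (s : Finset ι) {f : ι → (Fin n → ℝ) → ℝ}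
    (hf : ∀ k ∈ s, DifferentiableAt ℝ (f k) ϑ) :
    pd i (fun x => ∑ k ∈ s, f k x) ϑ = ∑ k ∈ s, pd i (f k) ϑ := by
  simp only [pd, fderiv_fun_sum hf, _root_.sum_apply]

theorem pd_log {f : (Fin n → ℝ) → ℝ} (hf : DifferentiableAt ℝ f ϑ) (h : f ϑ ≠ 0) :
    pd i (fun x => Real.log (f x)) ϑ = pd i f ϑ / f ϑ := by
  simp only [pd, fderiv.log hf h, smul_apply, smul_eq_mul]
  rw [inv_mul_eq_div]

end PartialDerivative

section MarkovPath

variable {α : Type*}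

def markovPathProb (d0 : α → ℝ) (M : α → α → ℝ) (T : ℕ) (y : Fin (T + 1) → α) : ℝ :=
  d0 (y 0) * ∏ t : Fin T, M (y t.castSucc) (y t.succ)

def pathSum (f : α → α → ℝ) (T : ℕ) (y : Fin (T + 1) → α) : ℝ :=
  ∑ t : Fin T, f (y t.castSucc) (y t.succ)

def markovMarginal [Fintype α] [DecidableEq α] (d0 : α → ℝ) (M : α → α → ℝ) (T : ℕ) (x : α) :
    ℝ :=
  ∑ y ∈ univ.filter (fun y : Fin (T + 1) → α => y (Fin.last T) = x), markovPathProb d0 M T y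

theorem sum_fin_succ_succ_eq_sum_snoc [Fintype α] {R : Type*} [AddCommMonoid R] (T : ℕ)
    (F : (Fin (T + 2) → α) → R) :
    ∑ y, F y = ∑ y : Fin (T + 1) → α, ∑ p, F (Fin.snoc y p) := by
  rw [← Equiv.sum_comp (Fin.snocEquiv fun _ => α) F, Fintype.sum_prod_type, Finset.sum_comm]
  rfl

variable (d0 : α → ℝ) (M : α → α → ℝ)

theorem markovPathProb_snoc (T : ℕ) (y : Fin (T + 1) → α) (p : α) :
    markovPathProb d0 M (T + 1) (Fin.snoc y p)
      = markovPathProb d0 M T y * M (y (Fin.last T)) p := by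
  have h0 : (Fin.snoc y p : Fin (T + 2) → α) 0 = y 0 := by
    rw [← Fin.castSucc_zero, Fin.snoc_castSucc]
  simp only [markovPathProb, Fin.prod_univ_castSucc, h0, Fin.succ_castSucc, Fin.snoc_castSucc,
    Fin.succ_last, Fin.snoc_last, mul_assoc]

theorem pathSum_snoc (f : α → α → ℝ) (T : ℕ) (y : Fin (T + 1) → α) (p : α) :
    pathSum f (T + 1) (Fin.snoc y p) = pathSum f T y + f (y (Fin.last T)) p := by
  simp only [pathSum, Fin.sum_univ_castSucc, Fin.succ_castSucc, Fin.snoc_castSucc,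
    Fin.succ_last, Fin.snoc_last]

theorem sum_markovPathProb_mul_last [Fintype α] [DecidableEq α] (T : ℕ) (g : α → ℝ) :
    ∑ y, markovPathProb d0 M T y * g (y (Fin.last T))
      = ∑ x, markovMarginal d0 M T x * g x := by
  rw [← Finset.sum_fiberwise univ (fun y : Fin (T + 1) → α => y (Fin.last T))]
  refine Finset.sum_congr rfl fun x _ => ?_
  rw [markovMarginal, Finset.sum_mul]
  exact Finset.sum_congr rfl fun y hy => by rw [(Finset.mem_filter.mp hy).2]

/-- Since `f` and `g` have conditional mean zero given the current state, increments at
different times are uncorrelated and only the diagonal terms survive. -/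
theorem sum_markovPathProb_mul_pathSum_mul_pathSum [Fintype α] [DecidableEq α]
    {f g : α → α → ℝ}
    (hM : ∀ x, ∑ p, M x p = 1) (hf : ∀ x, ∑ p, M x p * f x p = 0)
    (hg : ∀ x, ∑ p, M x p * g x p = 0) (T : ℕ) :
    ∑ y, markovPathProb d0 M T y * pathSum f T y * pathSum g T y
      = ∑ t ∈ range T, ∑ x, markovMarginal d0 M t x * ∑ p, M x p * (f x p * g x p) := by
  induction T with
  | zero => simp [pathSum]
  | succ T ih =>
    have step : ∀ x (a b : ℝ), ∑ p, M x p * ((a + f x p) * (b + g x p))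
        = a * b + ∑ p, M x p * (f x p * g x p) := by
      intro x a b
      have expand : ∀ p, M x p * ((a + f x p) * (b + g x p))
          = a * b * M x p + a * (M x p * g x p) + b * (M x p * f x p)
            + M x p * (f x p * g x p) := fun p => by ring
      simp only [expand, Finset.sum_add_distrib, ← Finset.mul_sum, hM, hf, hg]
      ring
    rw [sum_fin_succ_succ_eq_sum_snoc, Finset.sum_range_succ, ← ih,
      ← sum_markovPathProb_mul_last, ← Finset.sum_add_distrib]
    refine Finset.sum_congr rfl fun y _ => ?_
    simp only [markovPathProb_snoc, pathSum_snoc, mul_assoc, ← Finset.mul_sum, step]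
    ring

end MarkovPath

section OptionKernel

variable {S O : Type*} [DecidableEq O] {n : ℕ} (β : O → S → (Fin n → ℝ) → ℝ) (πO : S → O → ℝ)

theorem optKernel_self (ϑ : Fin n → ℝ) (o : O) (s' : S) :
    optKernel β πO ϑ o s' o = 1 - β o s' ϑ + β o s' ϑ * πO s' o := by
  simp [optKernel]

theorem optKernel_of_ne {o o' : O} (h : o' ≠ o) (ϑ : Fin n → ℝ) (s' : S) :
    optKernel β πO ϑ o s' o' = β o s' ϑ * πO s' o' := by
  simp [optKernel, h]

theorem optKernel_eq_affine (o : O) (s' : S) (o' : O) :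
    (fun ϑ => optKernel β πO ϑ o s' o')
      = fun ϑ => (if o' = o then 1 else 0) + (πO s' o' - if o' = o then 1 else 0) * β o s' ϑ := by
  funext ϑ
  simp only [optKernel]
  ring

theorem optKernel_pos (hβ0 : ∀ o s ϑ, 0 < β o s ϑ) (hβ1 : ∀ o s ϑ, β o s ϑ < 1)
    (hπO : ∀ s o, 0 < πO s o) (ϑ : Fin n → ℝ) (o : O) (s' : S) (o' : O) :
    0 < optKernel β πO ϑ o s' o' := by
  by_cases h : o' = o
  · subst h
    rw [optKernel_self]
    exact add_pos (sub_pos.2 (hβ1 _ _ _)) (mul_pos (hβ0 _ _ _) (hπO _ _))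
  · rw [optKernel_of_ne β πO h]
    exact mul_pos (hβ0 _ _ _) (hπO _ _)

theorem sum_optKernel [Fintype O] (hπOsum : ∀ s, ∑ o, πO s o = 1) (ϑ : Fin n → ℝ) (o : O)
    (s' : S) : ∑ o', optKernel β πO ϑ o s' o' = 1 := by
  simp [optKernel, Finset.sum_add_distrib, ← Finset.mul_sum, hπOsum]

variable {β} in
theorem differentiableAt_optKernel {ϑ : Fin n → ℝ} {o : O} {s' : S}
    (hβd : DifferentiableAt ℝ (β o s') ϑ) (o' : O) :
    DifferentiableAt ℝ (fun ϑ => optKernel β πO ϑ o s' o') ϑ := by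
  rw [optKernel_eq_affine]
  exact (hβd.const_mul _).const_add _

noncomputable def optScore (ϑ : Fin n → ℝ) (i : Fin n) (o : O) (s' : S) (o' : O) : ℝ :=
  pd i (fun ϑ' => Real.log (optKernel β πO ϑ' o s' o')) ϑ

variable {β πO} (hβ0 : ∀ o s ϑ, 0 < β o s ϑ) (hβ1 : ∀ o s ϑ, β o s ϑ < 1)
  (hπO : ∀ s o, 0 < πO s o)
include hβ0 hβ1 hπO

theorem optKernel_mul_optScore {ϑ : Fin n → ℝ} {o : O} {s' : S}
    (hβd : DifferentiableAt ℝ (β o s') ϑ) (i : Fin n) (o' : O) :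
    optKernel β πO ϑ o s' o' * optScore β πO ϑ i o s' o'
      = (πO s' o' - if o' = o then 1 else 0) * pd i (β o s') ϑ := by
  have hK := (optKernel_pos β πO hβ0 hβ1 hπO ϑ o s' o').ne'
  rw [optScore, pd_log (differentiableAt_optKernel πO hβd o') hK, mul_div_cancel₀ _ hK,
    optKernel_eq_affine, pd_const_add_mul hβd]

theorem sum_optKernel_mul_optScore [Fintype O] (hπOsum : ∀ s, ∑ o, πO s o = 1)
    {ϑ : Fin n → ℝ} {o : O} {s' : S} (hβd : DifferentiableAt ℝ (β o s') ϑ) (i : Fin n) :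
    ∑ o', optKernel β πO ϑ o s' o' * optScore β πO ϑ i o s' o' = 0 := by
  simp [optKernel_mul_optScore hβ0 hβ1 hπO hβd, ← Finset.sum_mul, Finset.sum_sub_distrib,
    hπOsum]

theorem sum_optKernel_mul_optScore_mul_optScore [Fintype O] (hπOsum : ∀ s, ∑ o, πO s o = 1)
    {ϑ : Fin n → ℝ} {o : O} {s' : S} (hβd : DifferentiableAt ℝ (β o s') ϑ) (i j : Fin n) :
    ∑ o', optKernel β πO ϑ o s' o' * (optScore β πO ϑ i o s' o' * optScore β πO ϑ j o s' o')
      = -(pd i (fun ϑ' => Real.log (β o s' ϑ')) ϑ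
          * pd j (fun ϑ' => Real.log (1 - β o s' ϑ' + β o s' ϑ' * πO s' o)) ϑ) := by
  have hb := (hβ0 o s' ϑ).ne'
  have hscore := optKernel_mul_optScore hβ0 hβ1 hπO hβd
  have hother : ∀ o' ∈ univ.erase o,
      optKernel β πO ϑ o s' o' * (optScore β πO ϑ i o s' o' * optScore β πO ϑ j o s' o')
        = πO s' o' * (pd i (β o s') ϑ * pd j (β o s') ϑ / β o s' ϑ) := by
    intro o' ho'
    have hne := Finset.ne_of_mem_erase ho'
    have hπ := (hπO s' o').ne'
    have hdiv : ∀ k, optScore β πO ϑ k o s' o' * β o s' ϑ = pd k (β o s') ϑ := fun k =>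
      mul_left_cancel₀ hπ (by
        have h := hscore k o'
        rw [optKernel_of_ne β πO hne, if_neg hne, sub_zero] at h
        linear_combination h)
    rw [optKernel_of_ne β πO hne, ← hdiv i, ← hdiv j]
    field_simp
  rw [← Finset.add_sum_erase _ _ (mem_univ o), Finset.sum_congr rfl hother, ← Finset.sum_mul,
    Finset.sum_erase_eq_sub (mem_univ o), hπOsum, pd_log hβd hb]
  simp only [← optKernel_self β πO]
  change _ = -(_ * optScore β πO ϑ j o s' o)
  have hi := hscore i o
  have hj := hscore j o
  have hk := optKernel_self β πO ϑ o s'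
  rw [if_pos rfl] at hi hj
  field_simp
  linear_combination (β o s' ϑ * optScore β πO ϑ j o s' o) * hi
    - (pd i (β o s') ϑ * optScore β πO ϑ j o s' o) * hk + pd i (β o s') ϑ * hj

end OptionKernel

section OptionPath

variable {S O : Type*} [DecidableEq O] {n : ℕ} (β : O → S → (Fin n → ℝ) → ℝ) (πO : S → O → ℝ)
  (Q : O → S → S → ℝ) (d0 : O × S → ℝ)

noncomputable def optTransition (ϑ : Fin n → ℝ) (x p : O × S) : ℝ :=
  optKernel β πO ϑ x.1 x.2 p.1 * Q p.1 x.2 p.2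

theorem tPathProb_eq_markovPathProb (T : ℕ) (ϑ : Fin n → ℝ) :
    tPathProb β πO Q d0 T ϑ = markovPathProb d0 (optTransition β πO Q ϑ) T :=
  rfl

theorem tMarginal_eq_markovMarginal [Fintype S] [Fintype O] [DecidableEq S] (ϑ : Fin n → ℝ)
    (t : ℕ) (s' : S) (o : O) :
    tMarginal β πO Q d0 ϑ t s' o = markovMarginal d0 (optTransition β πO Q ϑ) t (o, s') :=
  rfl

theorem sum_optTransition_mul [Fintype S] [Fintype O] (hQsum : ∀ o s', ∑ s'', Q o s' s'' = 1)
    (ϑ : Fin n → ℝ) (x : O × S) (F : O → ℝ) :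
    ∑ p, optTransition β πO Q ϑ x p * F p.1 = ∑ o', optKernel β πO ϑ x.1 x.2 o' * F o' := by
  simp only [optTransition, Fintype.sum_prod_type, mul_assoc, ← Finset.mul_sum,
    mul_comm (Q _ _ _), hQsum, mul_one]

variable {β πO} (hβ0 : ∀ o s ϑ, 0 < β o s ϑ) (hβ1 : ∀ o s ϑ, β o s ϑ < 1)
  (hπO : ∀ s o, 0 < πO s o)
include hβ0 hβ1 hπO

theorem tPathProb_nonneg (hQ : ∀ o s' s'', 0 ≤ Q o s' s'') (hd0 : ∀ p, 0 ≤ d0 p) (T : ℕ)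
    (ϑ : Fin n → ℝ) (y : Fin (T + 1) → O × S) : 0 ≤ tPathProb β πO Q d0 T ϑ y :=
  mul_nonneg (hd0 _) <| Finset.prod_nonneg fun _ _ =>
    mul_nonneg (optKernel_pos β πO hβ0 hβ1 hπO _ _ _ _).le (hQ _ _ _)

variable {ϑ : Fin n → ℝ} (hβd : ∀ o s, DifferentiableAt ℝ (β o s) ϑ)
include hβd

theorem pd_log_tPathProb {T : ℕ} {y : Fin (T + 1) → O × S} (h : tPathProb β πO Q d0 T ϑ y ≠ 0)
    (i : Fin n) :
    pd i (fun ϑ' => Real.log (tPathProb β πO Q d0 T ϑ' y)) ϑ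
      = pathSum (fun x p => optScore β πO ϑ i x.1 x.2 p.1) T y := by
  have hK : ∀ ϑ' (t : Fin T),
      optKernel β πO ϑ' (y t.castSucc).1 (y t.castSucc).2 (y t.succ).1 ≠ 0 :=
    fun ϑ' t => (optKernel_pos β πO hβ0 hβ1 hπO ϑ' _ _ _).ne'
  obtain ⟨hd0, hKQ⟩ := mul_ne_zero_iff.mp h
  have hQ : ∀ t : Fin T, Q (y t.succ).1 (y t.castSucc).2 (y t.succ).2 ≠ 0 := fun t =>
    right_ne_zero_of_mul (Finset.prod_ne_zero_iff.mp hKQ t (mem_univ t))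
  have hlog : (fun ϑ' => Real.log (tPathProb β πO Q d0 T ϑ' y))
      = fun ϑ' => ∑ t : Fin T,
          (Real.log (optKernel β πO ϑ' (y t.castSucc).1 (y t.castSucc).2 (y t.succ).1)
            + Real.log (Q (y t.succ).1 (y t.castSucc).2 (y t.succ).2))
          + Real.log (d0 (y 0)) := by
    funext ϑ'
    rw [tPathProb, Real.log_mul hd0 (Finset.prod_ne_zero_iff.mpr fun t _ =>
      mul_ne_zero (hK ϑ' t) (hQ t)), Real.log_prod fun t _ => mul_ne_zero (hK ϑ' t) (hQ t),
      add_comm]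
    exact congrArg (· + _) (Finset.sum_congr rfl fun t _ => Real.log_mul (hK ϑ' t) (hQ t))
  rw [hlog, pd_add_const, pd_sum _ fun t _ =>
    ((differentiableAt_optKernel πO (hβd _ _) _).log (hK ϑ t)).add_const _]
  exact Finset.sum_congr rfl fun t _ => pd_add_const _ _

theorem tPathFisher_eq_sum_pathSum [Fintype S] [Fintype O] (hQ : ∀ o s' s'', 0 ≤ Q o s' s'')
    (hd0 : ∀ p, 0 ≤ d0 p) (T : ℕ) (i j : Fin n) :
    tPathFisher β πO Q d0 T ϑ i j
      = ∑ y, markovPathProb d0 (optTransition β πO Q ϑ) T y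
          * pathSum (fun x p => optScore β πO ϑ i x.1 x.2 p.1) T y
          * pathSum (fun x p => optScore β πO ϑ j x.1 x.2 p.1) T y := by
  rw [tPathFisher, Finset.sum_filter]
  refine Finset.sum_congr rfl fun y _ => ?_
  split_ifs with h
  · rw [pd_log_tPathProb Q d0 hβ0 hβ1 hπO hβd h.ne', pd_log_tPathProb Q d0 hβ0 hβ1 hπO hβd h.ne',
      tPathProb_eq_markovPathProb]
  · have h0 : tPathProb β πO Q d0 T ϑ y = 0 :=
      le_antisymm (not_lt.mp h) (tPathProb_nonneg Q d0 hβ0 hβ1 hπO hQ hd0 T ϑ y)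
    rw [← tPathProb_eq_markovPathProb, h0, zero_mul, zero_mul]

theorem tPathFisher_eq_sum_tMarginal [Fintype S] [Fintype O] [DecidableEq S]
    (hπOsum : ∀ s, ∑ o, πO s o = 1) (hQ : ∀ o s' s'', 0 ≤ Q o s' s'')
    (hQsum : ∀ o s', ∑ s'', Q o s' s'' = 1) (hd0 : ∀ p, 0 ≤ d0 p) (T : ℕ) (i j : Fin n) :
    tPathFisher β πO Q d0 T ϑ i j
      = ∑ s', ∑ o, (∑ t ∈ range T, tMarginal β πO Q d0 ϑ t s' o)
          * -(pd i (fun ϑ' => Real.log (β o s' ϑ')) ϑ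
              * pd j (fun ϑ' => Real.log (1 - β o s' ϑ' + β o s' ϑ' * πO s' o)) ϑ) := by
  have hM : ∀ x, ∑ p, optTransition β πO Q ϑ x p = 1 := fun x => by
    simpa [sum_optKernel β πO hπOsum] using sum_optTransition_mul β πO Q hQsum ϑ x 1
  have hscore : ∀ (k : Fin n) x,
      ∑ p, optTransition β πO Q ϑ x p * optScore β πO ϑ k x.1 x.2 p.1 = 0 := fun k x => by
    rw [sum_optTransition_mul β πO Q hQsum ϑ x (optScore β πO ϑ k x.1 x.2),
      sum_optKernel_mul_optScore hβ0 hβ1 hπO hπOsum (hβd _ _)]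
  rw [tPathFisher_eq_sum_pathSum Q d0 hβ0 hβ1 hπO hβd hQ hd0,
    sum_markovPathProb_mul_pathSum_mul_pathSum _ _ hM (hscore i) (hscore j), Finset.sum_comm,
    Fintype.sum_prod_type, Finset.sum_comm]
  refine Finset.sum_congr rfl fun s' _ => Finset.sum_congr rfl fun o _ => ?_
  rw [Finset.sum_mul, sum_optTransition_mul β πO Q hQsum ϑ (o, s')
      (fun o' => optScore β πO ϑ i o s' o' * optScore β πO ϑ j o s' o'),
    sum_optKernel_mul_optScore_mul_optScore hβ0 hβ1 hπO hπOsum (hβd _ _)]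
  simp only [tMarginal_eq_markovMarginal]

end OptionPath

theorem infinite_horizon_state_option_transition_matrix_general
    {S O : Type*} [Fintype S] [Fintype O] [DecidableEq O] [DecidableEq S]
    {n : ℕ}
    (β : O → S → (Fin n → ℝ) → ℝ)
    (hβ0 : ∀ o s ϑ, 0 < β o s ϑ) (hβ1 : ∀ o s ϑ, β o s ϑ < 1)
    (hβsmooth : ∀ o s, ContDiff ℝ 2 (β o s))
    (πO : S → O → ℝ) (hπO : ∀ s o, 0 < πO s o) (hπOsum : ∀ s, ∑ o, πO s o = 1)
    (Q : O → S → S → ℝ) (hQ : ∀ o s' s'', 0 ≤ Q o s' s'')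
    (hQsum : ∀ o s', ∑ s'', Q o s' s'' = 1)
    (d0 : O × S → ℝ) (hd0 : ∀ p, 0 ≤ d0 p)
    (ϑ : Fin n → ℝ)
    (μ : S × O → ℝ)
    (hμ : ∀ s' o, Filter.Tendsto
      (fun T : ℕ => (1 / (T : ℝ)) * ∑ t ∈ Finset.range T, tMarginal β πO Q d0 ϑ t s' o)
      Filter.atTop (nhds (μ (s', o))))
    (i j : Fin n) :
    Filter.Tendsto (fun T : ℕ => (1 / (T : ℝ)) * tPathFisher β πO Q d0 T ϑ i j)
      Filter.atTop
      (nhds (-∑ s', ∑ o, μ (s', o)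
        * pd i (fun ϑ' => Real.log (β o s' ϑ')) ϑ
        * pd j (fun ϑ' => Real.log (1 - β o s' ϑ' + β o s' ϑ' * πO s' o)) ϑ)) := by
  have hβd : ∀ o s, DifferentiableAt ℝ (β o s) ϑ := fun o s =>
    (hβsmooth o s).differentiable (by norm_num) ϑ
  have hlim := tendsto_finsetSum univ fun s' _ => tendsto_finsetSum univ fun o _ =>
    (hμ s' o).mul_const (-(pd i (fun ϑ' => Real.log (β o s' ϑ')) ϑ
      * pd j (fun ϑ' => Real.log (1 - β o s' ϑ' + β o s' ϑ' * πO s' o)) ϑ))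
  convert hlim using 2 with T
  · rw [tPathFisher_eq_sum_tMarginal Q d0 hβ0 hβ1 hπO hβd hπOsum hQ hQsum hd0, Finset.mul_sum]
    refine Finset.sum_congr rfl fun s' _ => ?_
    rw [Finset.mul_sum]
    exact Finset.sum_congr rfl fun o _ => by ring
  · simp only [← Finset.sum_neg_distrib, mul_neg, mul_assoc]

/-- Theorem 2 (Infinite Horizon State-Option Transition Matrix): if the Cesàro averages
of the shifted state–option marginals converge to `μ`, then the normalized Fisher
information matrix over state–option transition paths converges to minus the stationary
expectation of the outer product of the score of the termination probability and the
score of the continuation probability. -/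
theorem infinite_horizon_state_option_transition_matrix
    {S O : Type*} [Fintype S] [Fintype O] [DecidableEq O] [DecidableEq S]
    [Nonempty S] [Nonempty O] {n : ℕ}
    (β : O → S → (Fin n → ℝ) → ℝ)
    (hβ0 : ∀ o s ϑ, 0 < β o s ϑ) (hβ1 : ∀ o s ϑ, β o s ϑ < 1)
    (hβsmooth : ∀ o s, ContDiff ℝ 2 (β o s))
    (πO : S → O → ℝ) (hπO : ∀ s o, 0 < πO s o) (hπOsum : ∀ s, ∑ o, πO s o = 1)
    (Q : O → S → S → ℝ) (hQ : ∀ o s' s'', 0 ≤ Q o s' s'')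
    (hQsum : ∀ o s', ∑ s'', Q o s' s'' = 1)
    (d0 : O × S → ℝ) (hd0 : ∀ p, 0 ≤ d0 p) (hd0sum : ∑ p, d0 p = 1)
    (ϑ : Fin n → ℝ)
    (μ : S × O → ℝ)
    (hμ : ∀ s' o, Filter.Tendsto
      (fun T : ℕ => (1 / (T : ℝ)) * ∑ t ∈ Finset.range T, tMarginal β πO Q d0 ϑ t s' o)
      Filter.atTop (nhds (μ (s', o))))
    (i j : Fin n) :
    Filter.Tendsto (fun T : ℕ => (1 / (T : ℝ)) * tPathFisher β πO Q d0 T ϑ i j)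
      Filter.atTop
      (nhds (-∑ s', ∑ o, μ (s', o)
        * pd i (fun ϑ' => Real.log (β o s' ϑ')) ϑ
        * pd j (fun ϑ' => Real.log (1 - β o s' ϑ' + β o s' ϑ' * πO s' o)) ϑ)) :=
  infinite_horizon_state_option_transition_matrix_general β hβ0 hβ1 hβsmooth πO hπO hπOsum Q hQ
    hQsum d0 hd0 ϑ μ hμ i j
end

section
/- Lemma 2. Under the precondition that the option does not change (O_t = O_{t−1} = o), the expected TD error for terminations is a consistent estimate of the advantage over options: for all s ∈ S and o ∈ O, ∑_a π(o,s,a) [ R(s,a) + γ ∑_{s'} P(s,a,s') ∑_{o'} K(o,s',o') q_O(s',o') ] − v(s) = a_O(s,o), where K(o,s',o') = (1 − β(o,s'))·𝟙[o' = o] + β(o,s') π_O(s',o') is the option-transition kernel, so that ∑_{o'} K(o,s',o') q_O(s',o') is the conditional expectation of the consistent value estimate at the next state S_{t+1} = s'. -/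
/-- Lemma 2: under the precondition that the option does not change (`O_t = O_{t−1} = o`),
the expected TD error for terminations is a consistent estimate of the advantage over
options: `∑_a π(o,s,a) [R(s,a) + γ ∑_{s'} P(s,a,s') ∑_{o'} K(o,s',o') q_O(s',o')] − v(s)
= a_O(s,o) = q_O(s,o) − v(s)`, where
`K(o,s',o') = (1 − β(o,s'))·𝟙[o' = o] + β(o,s')·π_O(s',o')` is the option-transition
kernel. -/
theorem expected_td_error_is_advantage_over_options
    {S A O : Type*} [Fintype S] [Fintype A] [Fintype O] [DecidableEq O]
    [Nonempty S] [Nonempty A] [Nonempty O]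
    (R : S → A → ℝ) (P : S → A → S → ℝ)
    (hP : ∀ s a s', 0 ≤ P s a s') (hPsum : ∀ s a, ∑ s', P s a s' = 1)
    (γ : ℝ) (hγ0 : 0 ≤ γ) (hγ1 : γ ≤ 1)
    (π : O → S → A → ℝ) (hπ : ∀ o s a, 0 ≤ π o s a) (hπsum : ∀ o s, ∑ a, π o s a = 1)
    (πO : S → O → ℝ) (hπO : ∀ s o, 0 ≤ πO s o) (hπOsum : ∀ s, ∑ o, πO s o = 1)
    (β : O → S → ℝ) (hβ0 : ∀ o s, 0 ≤ β o s) (hβ1 : ∀ o s, β o s ≤ 1)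
    (qU : S → O → A → ℝ) (qO : S → O → ℝ) (u : O → S → ℝ) (v : S → ℝ)
    (hqU : ∀ s o a, qU s o a = R s a + γ * ∑ s', P s a s' * u o s')
    (hu : ∀ o s', u o s' = (1 - β o s') * qO s' o + β o s' * v s')
    (hqO : ∀ s o, qO s o = ∑ a, π o s a * qU s o a)
    (hv : ∀ s, v s = ∑ o, πO s o * qO s o)
    (K : O → S → O → ℝ)
    (hK : ∀ o s' o', K o s' o' = (1 - β o s') * (if o' = o then 1 else 0) + β o s' * πO s' o') :
    ∀ (s : S) (o : O),
      (∑ a, π o s a * (R s a + γ * ∑ s', P s a s' * ∑ o', K o s' o' * qO s' o')) - v s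
        = qO s o - v s := by
  intro s o
  have hKsum : ∀ s', ∑ o', K o s' o' * qO s' o' = u o s' := by
    intro s'
    simp only [hK, add_mul, Finset.sum_add_distrib]
    rw [hu]
    congr 1
    · rw [Finset.sum_eq_single o]
      · simp
      · intro b _ hb; simp [hb]
      · simp
    · rw [hv, Finset.mul_sum]
      apply Finset.sum_congr rfl
      intro x _; ring
  have : ∀ a, π o s a * (R s a + γ * ∑ s', P s a s' * ∑ o', K o s' o' * qO s' o')
      = π o s a * qU s o a := by
    intro a
    rw [hqU]
    simp only [hKsum]
  rw [Finset.sum_congr rfl (fun a _ => this a), ← hqO]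
end

section
/- Per-step Fisher information of the option-transition distribution. For all indices i, j: ∑_{o'} k_ϑ(o') · ∂_i ln k_ϑ(o') · ∂_j ln k_ϑ(o') = −∂_i ln β(ϑ) · ∂_j ln(1 − β(ϑ) + β(ϑ)·π_O(o)); that is, the Fisher information matrix of the one-step option-transition distribution equals minus the outer product of the score of the termination probability β and the score of the continuation probability 1 − β + β·π_O(o). -/
/-!
Writing `k_ϑ(o') = (1 - β)·𝟙[o' = o] + β·π_O(o')`, every component has gradient
`(π_O(o') - 𝟙[o' = o])·∇β`, so all scores are multiples of the single linear form `∇β` and the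
Fisher information is `(∑ (π_O(o') - 𝟙[o' = o])² / k_ϑ(o')) ·∂_iβ·∂_jβ`. Off `o` the summands are
`π_O(o')/β`, summing to `(1 - π_O(o))/β`; at `o` it is `(1 - π_O(o))²/(1 - β + β π_O(o))`. As
`β(1 - π_O(o)) + (1 - β + β π_O(o)) = 1`, the total is `(1 - π_O(o))/(β (1 - β + β π_O(o)))`,
which is the product of the score `∂β/β` and minus the score `(π_O(o) - 1) ∂β/(1 - β + β π_O(o))`.
-/

open Finset

theorem pd_log_eq_div {n : ℕ} {g : (Fin n → ℝ) → ℝ} {g' : (Fin n → ℝ) →L[ℝ] ℝ}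
    {ϑ : Fin n → ℝ} (hg : HasFDerivAt g g' ϑ) (hg0 : g ϑ ≠ 0) (i : Fin n) :
    pd i (fun x => Real.log (g x)) ϑ = g' (Pi.single i 1) / g ϑ := by
  rw [pd, (hg.log hg0).fderiv, smul_apply, smul_eq_mul, inv_mul_eq_div]

theorem hasFDerivAt_mixture {E : Type*} [NormedAddCommGroup E] [NormedSpace ℝ E]
    {b : E → ℝ} {b' : E →L[ℝ] ℝ} {x : E} (hb : HasFDerivAt b b' x) (c p : ℝ) :
    HasFDerivAt (fun y => (1 - b y) * c + b y * p) ((p - c) • b') x := by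
  exact (((hb.const_sub 1).mul_const c).add (hb.mul_const p)).congr_fderiv (by module)

theorem sum_mul_pd_log_mul_pd_log_of_hasFDerivAt_smul {ι : Type*} [Fintype ι] {n : ℕ}
    {k : (Fin n → ℝ) → ι → ℝ} {a : ι → ℝ} {f' : (Fin n → ℝ) →L[ℝ] ℝ} {ϑ : Fin n → ℝ}
    (hk : ∀ o, HasFDerivAt (fun x => k x o) (a o • f') ϑ) (hk0 : ∀ o, k ϑ o ≠ 0)
    (i j : Fin n) :
    ∑ o, k ϑ o * pd i (fun x => Real.log (k x o)) ϑ * pd j (fun x => Real.log (k x o)) ϑ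
      = (∑ o, a o ^ 2 / k ϑ o) * (f' (Pi.single i 1) * f' (Pi.single j 1)) := by
  rw [sum_mul]
  refine sum_congr rfl fun o _ => ?_
  rw [pd_log_eq_div (hk o) (hk0 o), pd_log_eq_div (hk o) (hk0 o)]
  simp only [smul_apply, smul_eq_mul]
  field_simp [hk0 o]

theorem sum_sq_sub_indicator_div_mixture {O : Type*} [Fintype O] [DecidableEq O] (o : O)
    {π : O → ℝ} (hπ : ∀ o' ≠ o, π o' ≠ 0) (hπsum : ∑ o', π o' = 1) {b : ℝ} (hb : b ≠ 0)
    (hK : 1 - b + b * π o ≠ 0) :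
    ∑ o', (π o' - if o' = o then 1 else 0) ^ 2 / ((1 - b) * (if o' = o then 1 else 0) + b * π o')
      = (1 - π o) / (b * (1 - b + b * π o)) := by
  have hrest : ∑ o' ∈ univ.erase o, π o' = 1 - π o := by
    rw [← hπsum, ← add_sum_erase univ π (mem_univ o), add_sub_cancel_left]
  rw [← add_sum_erase univ _ (mem_univ o), if_pos rfl, mul_one,
    sum_congr rfl fun o' ho' => by
      rw [if_neg (ne_of_mem_erase ho'), sub_zero, mul_zero, zero_add, sq,
        mul_div_mul_right _ _ (hπ o' (ne_of_mem_erase ho'))],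
    ← sum_div, hrest]
  rw [div_add_div _ _ hK hb, div_eq_div_iff (mul_ne_zero hK hb) (mul_ne_zero hb hK)]
  ring

theorem option_transition_per_step_fisher_general
    {O : Type*} [Fintype O] [DecidableEq O] (o : O) {n : ℕ}
    (πO : O → ℝ) (hπO : ∀ o', 0 < πO o') (hπOsum : ∑ o', πO o' = 1)
    (β : (Fin n → ℝ) → ℝ) (ϑ : Fin n → ℝ)
    (hβdiff : DifferentiableAt ℝ β ϑ) (hβ0 : 0 < β ϑ) (hβ1 : β ϑ < 1)
    (k : (Fin n → ℝ) → O → ℝ)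
    (hk : ∀ ϑ' o', k ϑ' o' = (1 - β ϑ') * (if o' = o then 1 else 0) + β ϑ' * πO o')
    (i j : Fin n) :
    ∑ o', k ϑ o' * pd i (fun ϑ' => Real.log (k ϑ' o')) ϑ * pd j (fun ϑ' => Real.log (k ϑ' o')) ϑ
      = -(pd i (fun ϑ' => Real.log (β ϑ')) ϑ
          * pd j (fun ϑ' => Real.log (1 - β ϑ' + β ϑ' * πO o)) ϑ) := by
  have hβ := hβdiff.hasFDerivAt
  have hk_pos : ∀ o', 0 < k ϑ o' := fun o' => by
    have hπo' := hπO o'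
    have hδ : (0 : ℝ) ≤ if o' = o then 1 else 0 := by split_ifs <;> norm_num
    rw [hk]
    positivity
  have hK_pos : 0 < 1 - β ϑ + β ϑ * πO o := by simpa [hk] using hk_pos o
  have hK : HasFDerivAt (fun x => 1 - β x + β x * πO o) ((πO o - 1) • fderiv ℝ β ϑ) ϑ := by
    simpa using hasFDerivAt_mixture hβ 1 (πO o)
  rw [sum_mul_pd_log_mul_pd_log_of_hasFDerivAt_smul
      (fun o' => by simpa only [hk] using hasFDerivAt_mixture hβ _ (πO o'))
      (fun o' => (hk_pos o').ne') i j]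
  simp only [hk]
  rw [sum_sq_sub_indicator_div_mixture o (fun o' _ => (hπO o').ne') hπOsum hβ0.ne' hK_pos.ne',
    pd_log_eq_div hβ hβ0.ne', pd_log_eq_div hK hK_pos.ne']
  simp only [smul_apply, smul_eq_mul]
  field_simp
  ring

/-- Per-step Fisher information of the one-step option-transition distribution
`k_ϑ(o') = (1 − β(ϑ))·𝟙[o' = o] + β(ϑ)·π_O(o')`: it equals minus the outer product of the
score of the termination probability `β` and the score of the continuation probability
`1 − β + β·π_O(o)`. -/
theorem option_transition_per_step_fisher
    {O : Type*} [Fintype O] [Nonempty O] [DecidableEq O] (o : O) {n : ℕ}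
    (πO : O → ℝ) (hπO : ∀ o', 0 < πO o') (hπOsum : ∑ o', πO o' = 1)
    (β : (Fin n → ℝ) → ℝ) (ϑ : Fin n → ℝ)
    (hβdiff : DifferentiableAt ℝ β ϑ) (hβ0 : 0 < β ϑ) (hβ1 : β ϑ < 1)
    (k : (Fin n → ℝ) → O → ℝ)
    (hk : ∀ ϑ' o', k ϑ' o' = (1 - β ϑ') * (if o' = o then 1 else 0) + β ϑ' * πO o')
    (i j : Fin n) :
    ∑ o', k ϑ o' * pd i (fun ϑ' => Real.log (k ϑ' o')) ϑ * pd j (fun ϑ' => Real.log (k ϑ' o')) ϑ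
      = -(pd i (fun ϑ' => Real.log (β ϑ')) ϑ
          * pd j (fun ϑ' => Real.log (1 - β ϑ' + β ϑ' * πO o)) ϑ) :=
  option_transition_per_step_fisher_general o πO hπO hπOsum β ϑ hβdiff hβ0 hβ1 k hk i j
end
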